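/- arXiv:1203.2693 — 9 statements merged into one kernel-verified Lean document; each statement's English description precedes it below -/
import Mathlib

section
/- Let L = 1 − 1/log 3 and define A : [1,∞) → ℝ by A(x) = (x/(x+L))^{x−1}. Then A is strictly decreasing on [1,∞); consequently e^{−L} < A(x) for every x ≥ 1, and the infimum of A over [1,∞) equals e^{−L}. -/
/-!
Write `A x = exp (g x)` with `g x = (x - 1) (log x - log (x + L))`. Using `log t ≤ t - 1`,
`g' x ≤ -L / (x (x + L)) < 0`, so `A` is strictly decreasing; and
`g x = -(x log (1 + L/x)) + log (1 + L/x) → -L`, so `A x → exp (-L)`. A strictly decreasing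
function stays strictly above its limit at infinity, which gives both the strict lower bound and
the infimum.
-/

open Real Filter Set Topology

theorem StrictAntiOn.lt_of_tendsto_atTop {β : Type*} [LinearOrder β] [TopologicalSpace β]
    [OrderClosedTopology β] {f : ℝ → β} {a : ℝ} {b : β} (hf : StrictAntiOn f (Ici a))
    (hlim : Tendsto f atTop (𝓝 b)) {x : ℝ} (hx : a ≤ x) : b < f x := by
  have hx1 : x + 1 ∈ Ici a := by simp only [mem_Ici]; linarith
  have hb : b ≤ f (x + 1) :=
    le_of_tendsto hlim <| (eventually_ge_atTop (x + 1)).mono fun y hy =>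
      hf.antitoneOn hx1 (hx1.trans hy) hy
  exact hb.trans_lt (hf hx hx1 (by linarith))

theorem isGLB_image_Ici_of_tendsto_atTop {α β : Type*} [Preorder α] [IsDirected α (· ≤ ·)]
    [Nonempty α] [LinearOrder β] [TopologicalSpace β] [OrderTopology β] {f : α → β} {a : α}
    {b : β} (hlow : ∀ x, a ≤ x → b ≤ f x) (hlim : Tendsto f atTop (𝓝 b)) :
    IsGLB (f '' Ici a) b :=
  isGLB_of_mem_closure (forall_mem_image.2 hlow)
    (mem_closure_of_tendsto hlim ((eventually_ge_atTop a).mono fun _ hx => mem_image_of_mem f hx))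

section DivAddRpow

variable {L : ℝ}

theorem rpow_div_add_eq_exp (hL : 0 < L) {x : ℝ} (hx : 0 < x) :
    (x / (x + L)) ^ (x - 1) = exp ((x - 1) * (log x - log (x + L))) := by
  rw [rpow_def_of_pos (div_pos hx (by linarith)), log_div hx.ne' (by linarith), mul_comm]

theorem hasDerivAt_sub_one_mul_log_sub_log_add (hL : 0 < L) {x : ℝ} (hx : 0 < x) :
    HasDerivAt (fun y => (y - 1) * (log y - log (y + L)))
      ((log x - log (x + L)) + (x - 1) * (1 / x - 1 / (x + L))) x := by
  have hlog : HasDerivAt log (1 / x) x := by simpa [one_div] using hasDerivAt_log hx.ne'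
  have hlogL : HasDerivAt (fun y => log (y + L)) (1 / (x + L)) x := by
    simpa [one_div] using ((hasDerivAt_id' x).add_const L).log (by linarith)
  exact ((hasDerivAt_id' x).sub_const 1).mul (hlog.sub hlogL) |>.congr_deriv
    (by simp only [Pi.sub_apply]; ring)

theorem strictAntiOn_sub_one_mul_log_sub_log_add (hL : 0 < L) :
    StrictAntiOn (fun x => (x - 1) * (log x - log (x + L))) (Ici 1) := by
  apply strictAntiOn_of_deriv_neg (convex_Ici 1)
  · exact fun x hx =>
      (hasDerivAt_sub_one_mul_log_sub_log_add hL (one_pos.trans_le hx)).continuousAt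
        |>.continuousWithinAt
  intro x hx
  rw [interior_Ici, mem_Ioi] at hx
  have hx0 : 0 < x := by linarith
  have hxL : 0 < x + L := by linarith
  rw [(hasDerivAt_sub_one_mul_log_sub_log_add hL hx0).deriv]
  have hlog : log x - log (x + L) ≤ x / (x + L) - 1 := by
    rw [← log_div hx0.ne' hxL.ne']
    exact log_le_sub_one_of_pos (div_pos hx0 hxL)
  have hsum : x / (x + L) - 1 + (x - 1) * (1 / x - 1 / (x + L)) = -L / (x * (x + L)) := by
    field_simp
    ring
  have hneg : -L / (x * (x + L)) < 0 := div_neg_of_neg_of_pos (by linarith) (by positivity)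
  linarith

theorem tendsto_sub_one_mul_log_sub_log_add_atTop (L : ℝ) :
    Tendsto (fun x => (x - 1) * (log x - log (x + L))) atTop (𝓝 (-L)) := by
  have hlog : Tendsto (fun x => log (1 + L / x)) atTop (𝓝 0) := by
    simpa [div_eq_mul_inv] using ((tendsto_inv_atTop_zero.const_mul L).const_add 1).log
      (by norm_num)
  rw [show -L = -L + 0 by ring]
  refine ((tendsto_mul_log_one_add_div_atTop L).neg.add hlog).congr' ?_
  filter_upwards [eventually_gt_atTop 0, eventually_gt_atTop (-L)] with x hx hxL
  rw [show 1 + L / x = (x + L) / x by field_simp, log_div (by linarith) hx.ne']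
  ring

theorem strictAntiOn_div_add_rpow_sub_one (hL : 0 < L) :
    StrictAntiOn (fun x : ℝ => (x / (x + L)) ^ (x - 1)) (Ici 1) := by
  intro x hx y hy hxy
  simp only
  rw [rpow_div_add_eq_exp hL (one_pos.trans_le hx), rpow_div_add_eq_exp hL (one_pos.trans_le hy)]
  exact exp_lt_exp.2 (strictAntiOn_sub_one_mul_log_sub_log_add hL hx hy hxy)

theorem tendsto_div_add_rpow_sub_one_atTop (hL : 0 < L) :
    Tendsto (fun x : ℝ => (x / (x + L)) ^ (x - 1)) atTop (𝓝 (exp (-L))) :=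
  ((continuous_exp.tendsto _).comp (tendsto_sub_one_mul_log_sub_log_add_atTop L)).congr' <|
    (eventually_gt_atTop 0).mono fun _ hx => (rpow_div_add_eq_exp hL hx).symm

end DivAddRpow

theorem one_sub_inv_log_three_pos : 0 < 1 - 1 / log 3 := by
  have h : 1 < log 3 := by
    rw [lt_log_iff_exp_lt (by norm_num)]
    linarith [exp_one_lt_d9]
  rw [sub_pos, div_lt_one (by linarith)]
  exact h

/-- Let `L = 1 - 1/log 3` and `A x = (x/(x+L))^(x-1)` on `[1, ∞)`.
Then `A` is strictly decreasing on `[1, ∞)`, `exp (-L) < A x` for every `x ≥ 1`,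
and the infimum of `A` over `[1, ∞)` equals `exp (-L)`. -/
theorem stmt_1 :
    StrictAntiOn (fun x : ℝ => (x / (x + (1 - 1 / Real.log 3))) ^ (x - 1)) (Set.Ici 1) ∧
    (∀ x : ℝ, 1 ≤ x →
      Real.exp (-(1 - 1 / Real.log 3)) < (x / (x + (1 - 1 / Real.log 3))) ^ (x - 1)) ∧
    IsGLB ((fun x : ℝ => (x / (x + (1 - 1 / Real.log 3))) ^ (x - 1)) '' Set.Ici 1)
      (Real.exp (-(1 - 1 / Real.log 3))) := by
  have hanti := strictAntiOn_div_add_rpow_sub_one one_sub_inv_log_three_pos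
  have hlim := tendsto_div_add_rpow_sub_one_atTop one_sub_inv_log_three_pos
  have hlow := fun x (hx : 1 ≤ x) => hanti.lt_of_tendsto_atTop hlim hx
  exact ⟨hanti, hlow, isGLB_image_Ici_of_tendsto_atTop (fun x hx => (hlow x hx).le) hlim⟩
end

section
/- For every integer j ≥ 1, the function h_j is strictly decreasing on the interval [r_{j−1}, 1): if r_{j−1} ≤ s < t < 1 then h_j(t) < h_j(s). -/
/-! Put `A(t) = l - log (1 - t)` with `l = log 3 > 1`, so that `h_j` is a positive multiple of
`f(t) = t^k (1 - t) A(t)` with `k = j - 1`. Since `A' = 1/(1 - t)`,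
`t f'(t) = t^k (k (1 - t) - (A(t) - 1)((k + 1) t - k))`.
In closed form `r_k = k l / (k l + l - 1)`, the point where `k (1 - t) = (l - 1)((k + 1) t - k)`;
on `(r_k, 1)` we have `A > l` while `(k + 1) t - k` grows, so `f' < 0` there. -/

open Real Set

lemma one_lt_log_three : 1 < log 3 := by
  rw [lt_log_iff_exp_lt (by norm_num)]
  linarith [exp_one_lt_d9]

lemma hasDerivAt_pow_mul_one_sub_mul_sub_log (k : ℕ) (l : ℝ) {t : ℝ} (ht : t < 1) :
    HasDerivAt (fun x => x ^ k * (1 - x) * (l - log (1 - x)))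
      (k * t ^ (k - 1) * (1 - t) * (l - log (1 - t)) + t ^ k * (1 - (l - log (1 - t)))) t := by
  have hsub : HasDerivAt (fun x : ℝ => 1 - x) (-1) t := by
    simpa using (hasDerivAt_id t).const_sub 1
  have hA : HasDerivAt (fun x => l - log (1 - x)) (1 - t)⁻¹ t := by
    simpa using ((hasDerivAt_log (sub_ne_zero.2 ht.ne')).comp t hsub).const_sub l
  refine (((hasDerivAt_pow k t).mul hsub).mul hA).congr_deriv ?_
  rw [Pi.mul_apply, mul_assoc (t ^ k), mul_inv_cancel₀ (sub_ne_zero.2 ht.ne')]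
  ring

noncomputable def threshold (l : ℝ) (k : ℕ) : ℝ := k * l / (k * l + l - 1)

section

variable {l : ℝ} (hl : 1 < l) (k : ℕ)
include hl

lemma threshold_denom_pos : 0 < (k : ℝ) * l + l - 1 := by
  nlinarith [k.cast_nonneg (α := ℝ)]

lemma threshold_nonneg : 0 ≤ threshold l k :=
  div_nonneg (by positivity) (threshold_denom_pos hl k).le

lemma threshold_lt_one : threshold l k < 1 := by
  rw [threshold, div_lt_one (threshold_denom_pos hl k)]
  linarith

lemma sub_one_mul_threshold :
    (l - 1) * ((k + 1) * threshold l k - k) = k * (1 - threshold l k) := by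
  have h : threshold l k * (k * l + l - 1) = k * l :=
    div_mul_cancel₀ _ (threshold_denom_pos hl k).ne'
  linear_combination h

lemma one_sub_div_add_eq_threshold :
    1 - (1 - 1 / l) / (k + (1 - 1 / l)) = threshold l k := by
  have hl0 : l ≠ 0 := by positivity
  have hD := (threshold_denom_pos hl k).ne'
  have hL : 1 - 1 / l = (l - 1) / l := by field_simp
  have h : (k : ℝ) + (1 - 1 / l) = (k * l + l - 1) / l := by field_simp; ring
  rw [threshold, h, hL, div_div_div_cancel_right₀ hl0, eq_div_iff hD, sub_mul,
    div_mul_cancel₀ _ hD]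
  ring

lemma nat_mul_one_sub_lt_of_threshold_lt {t : ℝ} (hrt : threshold l k < t) (ht : t < 1) :
    k * (1 - t) < (l - log (1 - t) - 1) * ((k + 1) * t - k) := by
  set r := threshold l k
  have hr_nonneg : 0 ≤ (k + 1) * r - k := by
    have : 0 ≤ (l - 1) * ((k + 1) * r - k) := by
      rw [sub_one_mul_threshold hl]
      nlinarith [threshold_lt_one hl k]
    exact nonneg_of_mul_nonneg_right this (by linarith)
  have hlog : log (1 - t) < 0 := log_neg (by linarith) (by linarith [threshold_nonneg hl k])
  calc (k : ℝ) * (1 - t) ≤ k * (1 - r) := by gcongr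
    _ = (l - 1) * ((k + 1) * r - k) := (sub_one_mul_threshold hl k).symm
    _ ≤ (l - log (1 - t) - 1) * ((k + 1) * r - k) := by gcongr; linarith
    _ < (l - log (1 - t) - 1) * ((k + 1) * t - k) := by gcongr; linarith

theorem strictAntiOn_pow_mul_one_sub_mul_sub_log :
    StrictAntiOn (fun x => x ^ k * (1 - x) * (l - log (1 - x))) (Ico (threshold l k) 1) := by
  refine strictAntiOn_of_hasDerivWithinAt_neg (convex_Ico _ _)
    (fun t ht => (hasDerivAt_pow_mul_one_sub_mul_sub_log k l ht.2).continuousAt.continuousWithinAt)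
    (fun t ht => (hasDerivAt_pow_mul_one_sub_mul_sub_log k l
      (interior_subset (s := Ico _ _) ht).2).hasDerivWithinAt) ?_
  rw [interior_Ico]
  rintro t ⟨hrt, ht⟩
  have ht0 : 0 < t := (threshold_nonneg hl k).trans_lt hrt
  have hkey := nat_mul_one_sub_lt_of_threshold_lt hl k hrt ht
  set A := l - log (1 - t)
  have hmul : t * (k * t ^ (k - 1) * (1 - t) * A + t ^ k * (1 - A))
      = t ^ k * (k * (1 - t) - (A - 1) * ((k + 1) * t - k)) := by
    cases k with
    | zero => simp; ring
    | succ n => simp only [Nat.add_sub_cancel, pow_succ]; push_cast; ring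
  refine neg_of_mul_neg_right (a := t) ?_ ht0.le
  rw [hmul]
  exact mul_neg_of_pos_of_neg (pow_pos ht0 k) (by linarith)

end

/-- For every integer `j ≥ 1`, the function
`h_j t = (j / log (j+1)) * t^(j-1) * (1-t) * log (3/(1-t))`
is strictly decreasing on `[r_(j-1), 1)`, where `r_0 = 0` and
`r_j = 1 - L/(j+L)` with `L = 1 - 1/log 3`. -/
theorem stmt_2 (L : ℝ) (hL : L = 1 - 1 / Real.log 3)
    (r : ℕ → ℝ) (hr0 : r 0 = 0) (hr : ∀ j : ℕ, 1 ≤ j → r j = 1 - L / (j + L))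
    (j : ℕ) (hj : 1 ≤ j) :
    ∀ s t : ℝ, r (j - 1) ≤ s → s < t → t < 1 →
      ((j : ℝ) / Real.log ((j : ℝ) + 1)) * t ^ (j - 1) * (1 - t) * Real.log (3 / (1 - t)) <
      ((j : ℝ) / Real.log ((j : ℝ) + 1)) * s ^ (j - 1) * (1 - s) * Real.log (3 / (1 - s)) := by
  intro s t hs hst ht
  have hl := one_lt_log_three
  have hr_eq : r (j - 1) = threshold (log 3) (j - 1) := by
    rcases Nat.eq_zero_or_pos (j - 1) with hk | hk
    · simp [hk, hr0, threshold]
    · rw [hr _ hk, hL, one_sub_div_add_eq_threshold hl]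
  have hC : 0 < (j : ℝ) / log (j + 1) :=
    div_pos (by exact_mod_cast hj) (log_pos (by norm_cast; omega))
  have hf := strictAntiOn_pow_mul_one_sub_mul_sub_log hl (j - 1)
    ⟨hr_eq ▸ hs, hst.trans ht⟩ ⟨hr_eq ▸ hs.trans hst.le, ht⟩ hst
  simp only [log_div three_ne_zero (sub_ne_zero.2 ht.ne'),
    log_div three_ne_zero (sub_ne_zero.2 (hst.trans ht).ne'), mul_assoc] at hf ⊢
  exact mul_lt_mul_of_pos_left hf hC
end

section
/- For every integer j ≥ 1 and every t with r_{j−1} ≤ t ≤ r_j, one has h_j(t) ≥ L/(2·e^L). -/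
/-!
Write `u = 1 - t` and `r_n = n / (n + L)`. On `[r_{j-1}, r_j]` one has
`t ^ (j - 1) ≥ r_{j-1} ^ (j - 1) ≥ exp (-L)`, because `(1 + L / n) ^ n ≤ exp L`, and
`L / (j + L) ≤ u ≤ L / (j - 1 + L)`. The upper bound on `u` gives `(j + 1) u ≤ 3`, so the
logarithmic factor `log (3 / u)` cancels `log (j + 1)`; what is left is at least
`j exp (-L) L / (j + L) ≥ L exp (-L) / 2`.
-/

open Real

lemma exp_neg_le_div_add_pow {a : ℝ} (ha : 0 ≤ a) (n : ℕ) :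
    exp (-a) ≤ ((n : ℝ) / (n + a)) ^ n := by
  rcases n.eq_zero_or_pos with rfl | hn
  · simpa using ha
  have hn' : (0 : ℝ) < n := by exact_mod_cast hn
  have hpow : (((n : ℝ) + a) / n) ^ n ≤ exp a := calc
    (((n : ℝ) + a) / n) ^ n = (a / n + 1) ^ n := by field_simp; ring
    _ ≤ exp (a / n) ^ n := pow_le_pow_left₀ (by positivity) (add_one_le_exp _) n
    _ = exp a := by rw [← exp_nat_mul, mul_div_cancel₀ _ hn'.ne']
  rw [exp_neg, ← inv_div, inv_pow]
  exact inv_anti₀ (by positivity) hpow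

lemma log_add_two_le_log_three_div {a u : ℝ} (ha₀ : 0 < a) (ha₃ : a ≤ 3) (n : ℕ)
    (hu : 0 < u) (hua : u ≤ a / (n + a)) :
    log ((n : ℝ) + 1 + 1) ≤ log (3 / u) := by
  have hna : (0 : ℝ) < n + a := by positivity
  apply log_le_log (by positivity)
  rw [le_div_iff₀ hu]
  calc ((n : ℝ) + 1 + 1) * u ≤ ((n : ℝ) + 1 + 1) * (a / (n + a)) := by gcongr
    _ ≤ 3 := by
      rw [← mul_div_assoc, div_le_iff₀ hna]
      nlinarith [(n.cast_nonneg : (0 : ℝ) ≤ n)]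

lemma div_two_mul_exp_le {L t : ℝ} (hL₀ : 0 < L) (hL₁ : L ≤ 1) (n : ℕ)
    (ht₀ : (n : ℝ) / (n + L) ≤ t) (ht₁ : t ≤ ((n : ℝ) + 1) / (n + 1 + L)) :
    L / (2 * exp L) ≤
      (((n : ℝ) + 1) / log ((n : ℝ) + 1 + 1)) * t ^ n * (1 - t) * log (3 / (1 - t)) := by
  have hnL : (0 : ℝ) < n + L := by positivity
  have hn1L : (0 : ℝ) < n + 1 + L := by positivity
  have hu_lo : L / (n + 1 + L) ≤ 1 - t := by
    have : 1 - ((n : ℝ) + 1) / (n + 1 + L) = L / (n + 1 + L) := by field_simp; ring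
    linarith
  have hu_hi : 1 - t ≤ L / (n + L) := by
    have : 1 - (n : ℝ) / (n + L) = L / (n + L) := by field_simp; ring
    linarith
  have hu : 0 < 1 - t := lt_of_lt_of_le (by positivity) hu_lo
  have htn : exp (-L) ≤ t ^ n :=
    (exp_neg_le_div_add_pow hL₀.le n).trans (pow_le_pow_left₀ (by positivity) ht₀ n)
  have hlog := log_add_two_le_log_three_div hL₀ (by linarith) n hu hu_hi
  have hlog₀ : 0 < log ((n : ℝ) + 1 + 1) := log_pos (by linarith [n.cast_nonneg (α := ℝ)])
  have ht : 0 ≤ t := le_trans (by positivity) ht₀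
  have hhalf : L / 2 ≤ ((n : ℝ) + 1) * (L / (n + 1 + L)) := by
    rw [← mul_div_assoc, div_le_div_iff₀ (by norm_num) hn1L]
    nlinarith [(n.cast_nonneg : (0 : ℝ) ≤ n)]
  calc L / (2 * exp L) = L / 2 * exp (-L) := by rw [exp_neg]; field_simp
    _ ≤ ((n : ℝ) + 1) * (L / (n + 1 + L)) * t ^ n := by gcongr
    _ ≤ ((n : ℝ) + 1) * (1 - t) * t ^ n := by gcongr
    _ = (((n : ℝ) + 1) / log ((n : ℝ) + 1 + 1)) * t ^ n * (1 - t) * log ((n : ℝ) + 1 + 1) := by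
        field_simp
    _ ≤ (((n : ℝ) + 1) / log ((n : ℝ) + 1 + 1)) * t ^ n * (1 - t) * log (3 / (1 - t)) := by
        gcongr

/-- For every integer `j ≥ 1` and every `t` with `r_(j-1) ≤ t ≤ r_j`, one has
`h_j t ≥ L / (2 * exp L)`, where `h_j t = (j / log (j+1)) * t^(j-1) * (1-t) * log (3/(1-t))`,
`r_0 = 0`, `r_j = 1 - L/(j+L)` for `j ≥ 1`, and `L = 1 - 1/log 3`. -/
theorem stmt_3 (L : ℝ) (hL : L = 1 - 1 / Real.log 3)
    (r : ℕ → ℝ) (hr0 : r 0 = 0) (hr : ∀ j : ℕ, 1 ≤ j → r j = 1 - L / (j + L))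
    (j : ℕ) (hj : 1 ≤ j) :
    ∀ t : ℝ, r (j - 1) ≤ t → t ≤ r j →
      L / (2 * Real.exp L) ≤
      ((j : ℝ) / Real.log ((j : ℝ) + 1)) * t ^ (j - 1) * (1 - t) * Real.log (3 / (1 - t)) := by
  intro t ht₀ ht₁
  have hlog3 : 1 < log 3 := lt_trans (by norm_num) log_three_gt_d9
  have hL₀ : 0 < L := by
    rw [hL, sub_pos, div_lt_one (by linarith)]
    exact hlog3
  have hL₁ : L ≤ 1 := by
    rw [hL]
    linarith [one_div_pos.mpr (by linarith : 0 < log 3)]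
  have hr_eq : ∀ n : ℕ, r n = n / (n + L) := by
    intro n
    rcases n.eq_zero_or_pos with rfl | hn
    · simp [hr0]
    · rw [hr n hn]
      field_simp
      ring
  obtain ⟨n, rfl⟩ := Nat.exists_eq_add_of_le' hj
  rw [Nat.add_sub_cancel, hr_eq] at ht₀
  rw [hr_eq] at ht₁
  push_cast at ht₁ ⊢
  exact div_two_mul_exp_le hL₀ hL₁ n ht₀ ht₁
end

section
/- For every integer j ≥ 11 there exists exactly one t ∈ (0,1) such that H_j(s) ≤ H_j(t) for all s ∈ (0,1); that is, H_j attains its absolute maximum over (0,1) at a unique point. -/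
/-!
On `[0, 1]` the function `H_j` is continuous, because `u * log (3 / u) = u * log 3 - u * log u`
extends continuously to `u = 0`; it vanishes at both endpoints and is positive in between, so it
attains its maximum inside `(0, 1)`. The maximiser is unique because
`log H_j t = log j + (j - 1) * log t + log ((1 - t) * log (3 / (1 - t)))` is strictly concave:
`log` is strictly concave, and `(1 - t) * log (3 / (1 - t))` is positive and concave, so its
logarithm is concave.
-/

open Real Set

lemma StrictConcaveOn.const_mul {E : Type*} [AddCommMonoid E] [SMul ℝ E] {s : Set E}
    {f : E → ℝ} {c : ℝ} (hc : 0 < c) (hf : StrictConcaveOn ℝ s f) :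
    StrictConcaveOn ℝ s (fun x => c * f x) := by
  refine ⟨hf.1, fun x hx y hy hxy a b ha hb hab => ?_⟩
  have := mul_lt_mul_of_pos_left (hf.2 hx hy hxy ha hb hab) hc
  simp only [smul_eq_mul] at this ⊢
  linarith

lemma ConcaveOn.log {E : Type*} [AddCommMonoid E] [SMul ℝ E] {s : Set E} {f : E → ℝ}
    (hf : ConcaveOn ℝ s f) (hpos : ∀ x ∈ s, 0 < f x) :
    ConcaveOn ℝ s (fun x => log (f x)) := by
  refine ⟨hf.1, fun x hx y hy a b ha hb hab => ?_⟩
  calc a • Real.log (f x) + b • Real.log (f y) ≤ Real.log (a • f x + b • f y) :=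
        strictConcaveOn_log_Ioi.concaveOn.2 (hpos x hx) (hpos y hy) ha hb hab
    _ ≤ Real.log (f (a • x + b • y)) :=
        log_le_log (convex_Ioi (0 : ℝ) (hpos x hx) (hpos y hy) ha hb hab) (hf.2 hx hy ha hb hab)

lemma exists_isMaxOn_Ioo {f : ℝ → ℝ} {a b c : ℝ} (hf : ContinuousOn f (Icc a b))
    (hc : c ∈ Ioo a b) (ha : f a < f c) (hb : f b < f c) :
    ∃ x ∈ Ioo a b, IsMaxOn f (Ioo a b) x := by
  obtain ⟨x, hx, hmax⟩ := isCompact_Icc.exists_isMaxOn ⟨c, Ioo_subset_Icc_self hc⟩ hf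
  have hcx : f c ≤ f x := hmax (Ioo_subset_Icc_self hc)
  have hxa : x ≠ a := by rintro rfl; linarith
  have hxb : x ≠ b := by rintro rfl; linarith
  exact ⟨x, ⟨lt_of_le_of_ne hx.1 hxa.symm, lt_of_le_of_ne hx.2 hxb⟩,
    hmax.on_subset Ioo_subset_Icc_self⟩

lemma eq_of_isMaxOn_of_strictConcaveOn_log {E : Type*} [AddCommMonoid E] [SMul ℝ E]
    {s : Set E} {f : E → ℝ} {x y : E} (hf : StrictConcaveOn ℝ s (fun z => log (f z)))
    (hpos : ∀ z ∈ s, 0 < f z) (hfx : IsMaxOn f s x) (hfy : IsMaxOn f s y) (hx : x ∈ s)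
    (hy : y ∈ s) : x = y := by
  have hlog {w} (hfw : IsMaxOn f s w) : IsMaxOn (fun z => log (f z)) s w :=
    fun z hz => log_le_log (hpos z hz) (hfw hz)
  exact hf.eq_of_isMaxOn (hlog hfx) (hlog hfy) hx hy

lemma mul_log_div_eq_mul_log_add_negMulLog {a : ℝ} (ha : a ≠ 0) (u : ℝ) :
    u * log (a / u) = u * log a + negMulLog u := by
  rcases eq_or_ne u 0 with rfl | hu
  · simp
  · rw [log_div ha hu, negMulLog]
    ring

lemma concaveOn_mul_log_div {a : ℝ} (ha : a ≠ 0) :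
    ConcaveOn ℝ (Ici 0) (fun u => u * log (a / u)) := by
  simp_rw [mul_log_div_eq_mul_log_add_negMulLog ha]
  exact ((LinearMap.mul ℝ ℝ).flip (log a)).concaveOn (convex_Ici 0) |>.add concaveOn_negMulLog

lemma concaveOn_one_sub_mul_log_div {a : ℝ} (ha : a ≠ 0) :
    ConcaveOn ℝ (Iic 1) (fun t => (1 - t) * log (a / (1 - t))) := by
  have h := (concaveOn_mul_log_div ha).comp_affineMap
    (AffineMap.const ℝ ℝ (1 : ℝ) - AffineMap.id ℝ ℝ)
  have hpre : (AffineMap.const ℝ ℝ (1 : ℝ) - AffineMap.id ℝ ℝ) ⁻¹' Ici 0 = Iic 1 := by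
    ext t; simp
  rwa [hpre] at h

noncomputable def H (j : ℕ) (t : ℝ) : ℝ := j * t ^ (j - 1) * (1 - t) * log (3 / (1 - t))

lemma H_eq (j : ℕ) (t : ℝ) :
    H j t = j * t ^ (j - 1) * ((1 - t) * log 3 + negMulLog (1 - t)) := by
  rw [H, mul_assoc _ (1 - t), mul_log_div_eq_mul_log_add_negMulLog (by norm_num)]

lemma continuous_H (j : ℕ) : Continuous (H j) := by
  simp_rw [funext (H_eq j)]
  fun_prop

lemma H_zero {j : ℕ} (hj : 2 ≤ j) : H j 0 = 0 := by
  simp [H, zero_pow (show j - 1 ≠ 0 by omega)]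

lemma H_one (j : ℕ) : H j 1 = 0 := by
  simp [H]

lemma one_sub_mul_log_div_pos {t : ℝ} (ht : t ∈ Ioo 0 1) : 0 < (1 - t) * log (3 / (1 - t)) := by
  have h1t : 0 < 1 - t := sub_pos.2 ht.2
  exact mul_pos h1t (log_pos (by rw [one_lt_div h1t]; linarith [ht.1]))

lemma H_pos {j : ℕ} (hj : 0 < j) {t : ℝ} (ht : t ∈ Ioo 0 1) : 0 < H j t := by
  have ht0 := ht.1
  have hg := one_sub_mul_log_div_pos ht
  rw [H, mul_assoc _ (1 - t)]
  positivity

lemma log_H {j : ℕ} (hj : 0 < j) {t : ℝ} (ht : t ∈ Ioo 0 1) :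
    log (H j t) = ((j - 1 : ℕ) : ℝ) * log t + log ((1 - t) * log (3 / (1 - t))) + log j := by
  have ht0 := ht.1
  have hg := one_sub_mul_log_div_pos ht
  rw [H, mul_assoc _ (1 - t), log_mul (by positivity) hg.ne',
    log_mul (by positivity) (by positivity), log_pow]
  ring

lemma strictConcaveOn_log_H {j : ℕ} (hj : 2 ≤ j) :
    StrictConcaveOn ℝ (Ioo 0 1) (fun t => log (H j t)) := by
  have hpow : StrictConcaveOn ℝ (Ioo 0 1) (fun t => ((j - 1 : ℕ) : ℝ) * log t) :=
    (strictConcaveOn_log_Ioi.subset Ioo_subset_Ioi_self (convex_Ioo 0 1)).const_mul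
      (by norm_cast; omega)
  have hg : ConcaveOn ℝ (Ioo 0 1) (fun t => log ((1 - t) * log (3 / (1 - t)))) :=
    ((concaveOn_one_sub_mul_log_div (by norm_num)).subset (fun t ht => ht.2.le)
      (convex_Ioo 0 1)).log fun t ht => one_sub_mul_log_div_pos ht
  exact ((hpow.add_concaveOn hg).add_const (log j)).congr
    fun t ht => (log_H (by omega) ht).symm

/-- For every integer `j ≥ 11`, the function
`H_j t = j * t^(j-1) * (1-t) * log (3/(1-t))` attains its absolute maximum
over `(0,1)` at exactly one point `t ∈ (0,1)`. -/
theorem stmt_4 (j : ℕ) (hj : 11 ≤ j) :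
    ∃! t : ℝ, t ∈ Set.Ioo (0 : ℝ) 1 ∧
      ∀ s ∈ Set.Ioo (0 : ℝ) 1,
        (j : ℝ) * s ^ (j - 1) * (1 - s) * Real.log (3 / (1 - s)) ≤
        (j : ℝ) * t ^ (j - 1) * (1 - t) * Real.log (3 / (1 - t)) := by
  have hj2 : 2 ≤ j := by omega
  have hpos : ∀ t ∈ Ioo (0 : ℝ) 1, 0 < H j t := fun t ht => H_pos (by omega) ht
  have hhalf : (1 / 2 : ℝ) ∈ Ioo 0 1 := by norm_num
  obtain ⟨t, ht, hmax⟩ := exists_isMaxOn_Ioo (continuous_H j).continuousOn hhalf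
    (by rw [H_zero hj2]; exact hpos _ hhalf) (by rw [H_one]; exact hpos _ hhalf)
  refine ⟨t, ⟨ht, isMaxOn_iff.1 hmax⟩, fun s ⟨hs, hsmax⟩ => ?_⟩
  exact eq_of_isMaxOn_of_strictConcaveOn_log (strictConcaveOn_log_H hj2) hpos
    (isMaxOn_iff.2 hsmax) hmax hs ht
end

section
/- Suppose that for each integer j ≥ 11, t_j ∈ (0,1) satisfies ((j−1) − j·t_j)·log(3/(1−t_j)) + t_j = 0. Then t_j → 1 and j·(1−t_j) → 1 as j → ∞. -/
/-!
Put `u = 1 - t` and `L = log (3 / u) > 0`. The equation reads `(j u - 1) L = -t`, so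
`j u - 1 = -t / L` lies in `(-1/L, 0)`. In particular `u < 1/j`, which gives `t → 1`, and then
`L ≥ log (3 j)`, so `|j u - 1| ≤ 1 / log (3 j) → 0`.
-/

open Real Filter Topology

section CriticalPoint

variable {x t : ℝ}

lemma log_three_div_one_sub_pos (ht0 : 0 < t) (ht1 : t < 1) : 0 < log (3 / (1 - t)) :=
  log_pos <| (one_lt_div (by linarith)).2 (by linarith)

lemma mul_one_sub_sub_one_eq_neg_div_log (ht0 : 0 < t) (ht1 : t < 1)
    (heq : ((x - 1) - x * t) * log (3 / (1 - t)) + t = 0) :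
    x * (1 - t) - 1 = -t / log (3 / (1 - t)) := by
  rw [eq_div_iff (log_three_div_one_sub_pos ht0 ht1).ne']
  linear_combination heq

lemma mul_one_sub_lt_one (ht0 : 0 < t) (ht1 : t < 1)
    (heq : ((x - 1) - x * t) * log (3 / (1 - t)) + t = 0) :
    x * (1 - t) < 1 := by
  have hneg : -t / log (3 / (1 - t)) < 0 :=
    div_neg_of_neg_of_pos (neg_neg_of_pos ht0) (log_three_div_one_sub_pos ht0 ht1)
  linarith [mul_one_sub_sub_one_eq_neg_div_log ht0 ht1 heq]

lemma abs_sub_one_le_inv (hx : 0 < x) (ht0 : 0 < t) (ht1 : t < 1)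
    (heq : ((x - 1) - x * t) * log (3 / (1 - t)) + t = 0) :
    |t - 1| ≤ x⁻¹ := by
  rw [abs_sub_comm, abs_of_pos (by linarith), ← one_div, le_div_iff₀' hx]
  exact (mul_one_sub_lt_one ht0 ht1 heq).le

lemma abs_mul_one_sub_sub_one_le_inv_log (hx : 1 / 3 < x) (ht0 : 0 < t) (ht1 : t < 1)
    (heq : ((x - 1) - x * t) * log (3 / (1 - t)) + t = 0) :
    |x * (1 - t) - 1| ≤ (log (3 * x))⁻¹ := by
  have hu : 0 < 1 - t := by linarith
  have hL : 0 < log (3 / (1 - t)) := log_three_div_one_sub_pos ht0 ht1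
  have hlog_le : log (3 * x) ≤ log (3 / (1 - t)) := by
    refine log_le_log (by linarith) ((le_div_iff₀ hu).2 ?_)
    nlinarith [mul_one_sub_lt_one ht0 ht1 heq]
  rw [mul_one_sub_sub_one_eq_neg_div_log ht0 ht1 heq, abs_div, abs_neg, abs_of_pos ht0,
    abs_of_pos hL, div_eq_mul_inv]
  calc t * (log (3 / (1 - t)))⁻¹ ≤ 1 * (log (3 * x))⁻¹ := by
        gcongr
        exact log_pos (by linarith)
    _ = (log (3 * x))⁻¹ := one_mul _

end CriticalPoint

lemma tendsto_of_abs_sub_le {f g : ℕ → ℝ} {a : ℝ} (hg : Tendsto g atTop (𝓝 0))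
    (hfg : ∀ᶠ n in atTop, |f n - a| ≤ g n) : Tendsto f atTop (𝓝 a) :=
  tendsto_iff_norm_sub_tendsto_zero.2 <|
    squeeze_zero' (Eventually.of_forall fun _ => norm_nonneg _) hfg hg

lemma tendsto_inv_log_three_mul_natCast :
    Tendsto (fun n : ℕ => (log (3 * (n : ℝ)))⁻¹) atTop (𝓝 0) :=
  (tendsto_log_atTop.comp <|
    tendsto_natCast_atTop_atTop.const_mul_atTop (by norm_num)).inv_tendsto_atTop

/-- Suppose for each integer `j ≥ 11` that `t_j ∈ (0,1)` satisfies the critical-point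
equation `((j-1) - j*t_j) * log (3/(1-t_j)) + t_j = 0`.
Then `t_j → 1` and `j * (1 - t_j) → 1` as `j → ∞`. -/
theorem stmt_5 (t : ℕ → ℝ)
    (h : ∀ j : ℕ, 11 ≤ j → t j ∈ Set.Ioo (0 : ℝ) 1 ∧
      (((j : ℝ) - 1) - (j : ℝ) * t j) * Real.log (3 / (1 - t j)) + t j = 0) :
    Filter.Tendsto t Filter.atTop (nhds 1) ∧
    Filter.Tendsto (fun j : ℕ => (j : ℝ) * (1 - t j)) Filter.atTop (nhds 1) := by
  have hj : ∀ j : ℕ, 11 ≤ j → (1 : ℝ) ≤ j := fun j hj => by exact_mod_cast (by omega : 1 ≤ j)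
  constructor
  · refine tendsto_of_abs_sub_le tendsto_inv_atTop_nhds_zero_nat ?_
    filter_upwards [eventually_ge_atTop 11] with j hj11
    obtain ⟨⟨ht0, ht1⟩, heq⟩ := h j hj11
    exact abs_sub_one_le_inv (by linarith [hj j hj11]) ht0 ht1 heq
  · refine tendsto_of_abs_sub_le tendsto_inv_log_three_mul_natCast ?_
    filter_upwards [eventually_ge_atTop 11] with j hj11
    obtain ⟨⟨ht0, ht1⟩, heq⟩ := h j hj11
    exact abs_mul_one_sub_sub_one_le_inv_log (by linarith [hj j hj11]) ht0 ht1 heq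
end

section
/- Suppose that for each integer j ≥ 11, t_j ∈ (0,1) satisfies ((j−1) − j·t_j)·log(3/(1−t_j)) + t_j = 0. Then t_j^{j−1} → 1/e as j → ∞. -/
open Filter Real

/-- Suppose for each integer `j ≥ 11` that `t_j ∈ (0,1)` satisfies the critical-point
equation `((j-1) - j*t_j) * log (3/(1-t_j)) + t_j = 0`.
Then `t_j^(j-1) → 1/e` as `j → ∞`. -/
theorem stmt_6 (t : ℕ → ℝ)
    (h : ∀ j : ℕ, 11 ≤ j → t j ∈ Set.Ioo (0 : ℝ) 1 ∧
      (((j : ℝ) - 1) - (j : ℝ) * t j) * Real.log (3 / (1 - t j)) + t j = 0) :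
    Filter.Tendsto (fun j : ℕ => t j ^ (j - 1)) Filter.atTop (nhds (1 / Real.exp 1)) := by
  set L : ℕ → ℝ := fun j => Real.log (3 / (1 - t j)) with hLdef
  -- basic facts
  have hL0 : ∀ j : ℕ, 11 ≤ j → 0 < L j := by
    intro j hj
    obtain ⟨⟨ht0, ht1⟩, _⟩ := h j hj
    apply Real.log_pos
    have h1t : 0 < 1 - t j := by linarith
    rw [lt_div_iff₀ h1t]; linarith
  -- j * (1 - t j) = 1 - t j / L j
  have hkey : ∀ j : ℕ, 11 ≤ j → (j : ℝ) * (1 - t j) = 1 - t j / L j := by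
    intro j hj
    obtain ⟨⟨ht0, ht1⟩, heq⟩ := h j hj
    have hLne : L j ≠ 0 := (hL0 j hj).ne'
    field_simp
    nlinarith [heq]
  -- 1 - t j ≤ 1 / j
  have hsle : ∀ j : ℕ, 11 ≤ j → 1 - t j ≤ 1 / (j : ℝ) := by
    intro j hj
    obtain ⟨⟨ht0, ht1⟩, _⟩ := h j hj
    have hjpos : (0:ℝ) < (j:ℝ) := by positivity
    have hu : 0 < t j / L j := div_pos ht0 (hL0 j hj)
    have := hkey j hj
    rw [le_div_iff₀ hjpos, mul_comm]
    linarith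
  -- s := 1 - t j → 0
  have hs0 : ∀ j : ℕ, 11 ≤ j → 0 < 1 - t j := by
    intro j hj; obtain ⟨⟨_, ht1⟩, _⟩ := h j hj; linarith
  have hsT : Tendsto (fun j : ℕ => 1 - t j) atTop (nhds 0) := by
    apply squeeze_zero' (eventually_atTop.2 ⟨11, fun j hj => (hs0 j hj).le⟩)
      (eventually_atTop.2 ⟨11, fun j hj => hsle j hj⟩)
    exact tendsto_one_div_atTop_nhds_zero_nat
  have htT : Tendsto t atTop (nhds 1) := by
    have := hsT.const_sub 1
    simpa using this
  -- L j ≥ log j, hence t j / L j → 0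
  have hLge : ∀ j : ℕ, 11 ≤ j → Real.log (j : ℝ) ≤ L j := by
    intro j hj
    have hjpos : (0:ℝ) < (j:ℝ) := by positivity
    have h1t := hs0 j hj
    apply Real.log_le_log hjpos
    rw [le_div_iff₀ h1t]
    have : (j:ℝ) * (1 - t j) ≤ 1 := by
      have := hsle j hj
      rw [div_eq_inv_mul] at this
      calc (j:ℝ) * (1 - t j) ≤ (j:ℝ) * ((j:ℝ)⁻¹ * 1) := by
            apply mul_le_mul_of_nonneg_left _ hjpos.le
            simpa using this
        _ = 1 := by field_simp
    linarith
  have hub : ∀ j : ℕ, 11 ≤ j → t j / L j ≤ (Real.log (j:ℝ))⁻¹ := by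
    intro j hj
    obtain ⟨⟨ht0, ht1⟩, _⟩ := h j hj
    have hlogj : 0 < Real.log (j:ℝ) := by
      apply Real.log_pos
      exact_mod_cast lt_of_lt_of_le (by norm_num : (1:ℕ) < 11) hj
    calc t j / L j ≤ 1 / L j := by
          gcongr
          exact (hL0 j hj).le
      _ ≤ 1 / Real.log (j:ℝ) := one_div_le_one_div_of_le hlogj (hLge j hj)
      _ = (Real.log (j:ℝ))⁻¹ := one_div _
  have huT : Tendsto (fun j : ℕ => t j / L j) atTop (nhds 0) := by
    apply squeeze_zero'
      (eventually_atTop.2 ⟨11, fun j hj =>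
        (div_pos ((h j hj).1.1) (hL0 j hj)).le⟩)
      (eventually_atTop.2 ⟨11, fun j hj => hub j hj⟩)
    have : Tendsto (fun j : ℕ => Real.log (j:ℝ)) atTop atTop :=
      Real.tendsto_log_atTop.comp tendsto_natCast_atTop_atTop
    exact this.inv_tendsto_atTop
  -- j * s → 1
  have hjsT : Tendsto (fun j : ℕ => (j : ℝ) * (1 - t j)) atTop (nhds 1) := by
    have h1 : Tendsto (fun j : ℕ => 1 - t j / L j) atTop (nhds 1) := by
      have := huT.const_sub 1
      simpa using this
    apply h1.congr' (eventually_atTop.2 ⟨11, fun j hj => (hkey j hj).symm⟩)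
  -- (j-1) * s → 1
  have hj1sT : Tendsto (fun j : ℕ => ((j : ℝ) - 1) * (1 - t j)) atTop (nhds 1) := by
    have := hjsT.sub hsT
    simp only [sub_zero] at this
    apply this.congr
    intro j; ring
  -- squeeze: (j-1) * log t → -1
  have hgT : Tendsto (fun j : ℕ => ((j : ℝ) - 1) * Real.log (t j)) atTop (nhds (-1)) := by
    apply tendsto_of_tendsto_of_tendsto_of_le_of_le'
      (g := fun j : ℕ => -(((j : ℝ) - 1) * (1 - t j) / t j))
      (h := fun j : ℕ => -(((j : ℝ) - 1) * (1 - t j)))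
    · have := (hj1sT.div htT one_ne_zero).neg
      simpa using this
    · simpa using hj1sT.neg
    · filter_upwards [eventually_atTop.2 ⟨11, fun j hj => hj⟩] with j hj
      obtain ⟨⟨ht0, ht1⟩, _⟩ := h j hj
      have hj1 : (0:ℝ) ≤ (j:ℝ) - 1 := by
        have : (1:ℝ) ≤ (j:ℝ) := by exact_mod_cast le_trans (by norm_num) hj
        linarith
      have hlog : -((1 - t j) / t j) ≤ Real.log (t j) := by
        have hinv : Real.log (t j)⁻¹ ≤ (t j)⁻¹ - 1 :=
          Real.log_le_sub_one_of_pos (by positivity)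
        rw [Real.log_inv] at hinv
        have : (t j)⁻¹ - 1 = (1 - t j) / t j := by field_simp
        linarith [this ▸ hinv]
      calc -(((j : ℝ) - 1) * (1 - t j) / t j)
          = ((j:ℝ) - 1) * (-((1 - t j) / t j)) := by ring
        _ ≤ ((j:ℝ) - 1) * Real.log (t j) := mul_le_mul_of_nonneg_left hlog hj1
    · filter_upwards [eventually_atTop.2 ⟨11, fun j hj => hj⟩] with j hj
      obtain ⟨⟨ht0, ht1⟩, _⟩ := h j hj
      have hj1 : (0:ℝ) ≤ (j:ℝ) - 1 := by
        have : (1:ℝ) ≤ (j:ℝ) := by exact_mod_cast le_trans (by norm_num) hj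
        linarith
      have hlog : Real.log (t j) ≤ -(1 - t j) := by
        have := Real.log_le_sub_one_of_pos ht0
        linarith
      calc ((j:ℝ) - 1) * Real.log (t j)
          ≤ ((j:ℝ) - 1) * (-(1 - t j)) := mul_le_mul_of_nonneg_left hlog hj1
        _ = -(((j:ℝ) - 1) * (1 - t j)) := by ring
  -- conclude
  have hexpT : Tendsto (fun j : ℕ => Real.exp (((j : ℝ) - 1) * Real.log (t j)))
      atTop (nhds (Real.exp (-1))) := (Real.continuous_exp.tendsto _).comp hgT
  have hfin : Real.exp (-1) = 1 / Real.exp 1 := by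
    rw [Real.exp_neg, one_div]
  rw [← hfin]
  apply hexpT.congr' (eventually_atTop.2 ⟨11, fun j hj => ?_⟩)
  obtain ⟨⟨ht0, ht1⟩, _⟩ := h j hj
  have hcast : ((j - 1 : ℕ) : ℝ) = (j : ℝ) - 1 := by
    have : 1 ≤ j := le_trans (by norm_num) hj
    push_cast [Nat.cast_sub this]; ring
  rw [← hcast, Real.exp_nat_mul, Real.exp_log ht0]
end

section
/- One has lim_{j→∞} e·‖F_j‖_log / log(j+1) = 1, where ‖F_j‖_log = sup_{z∈𝔻} (1−|z|)·log(3/(1−|z|))·j·|z|^{j−1} is the log-Bloch seminorm of the monomial F_j(z) = z^j. -/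
/-!
Write `t = 1 - r`. Since `r ^ n ≤ exp (-n t)`, the substitution `u = n t` bounds the profile
`t log (c/t) (n+1) r^n` by `(1 + 1/n) · u e^{-u} (log (c n) - log u)`, and the two elementary
bounds `u e^{-u} ≤ e⁻¹` and `-u log u ≤ e⁻¹` give `(1 + 1/n)(log (c n) + 1) e⁻¹`.
At `r = n/(n+1)` the profile equals `log (c (n+1)) (n/(n+1))^n ≥ e⁻¹ log (c (n+1))`.
Both bounds are `e⁻¹ log n + O(1)`.
-/

open Filter Real Topology

namespace Real

lemma negMulLog_le_exp_neg_one {x : ℝ} (hx : 0 < x) : negMulLog x ≤ exp (-1) := by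
  have h : -log x ≤ exp (-1) * x⁻¹ := by
    simpa [exp_sub, exp_neg, exp_log hx, div_eq_mul_inv, mul_comm] using
      add_one_le_exp (-log x - 1)
  calc negMulLog x = x * -log x := by rw [negMulLog]; ring
    _ ≤ x * (exp (-1) * x⁻¹) := by gcongr
    _ = exp (-1) := by field_simp

lemma mul_exp_neg_mul_sub_log_le {a u : ℝ} (ha : 0 ≤ a) (hu : 0 < u) :
    u * exp (-u) * (a - log u) ≤ exp (-1) * (a + 1) := by
  have hlog : exp (-u) * negMulLog u ≤ exp (-1) := by
    rcases le_total (negMulLog u) 0 with h | h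
    · exact (mul_nonpos_of_nonneg_of_nonpos (exp_pos _).le h).trans (exp_pos _).le
    · calc exp (-u) * negMulLog u ≤ 1 * negMulLog u := by
            gcongr; exact exp_le_one_iff.mpr (by linarith)
        _ ≤ exp (-1) := by rw [one_mul]; exact negMulLog_le_exp_neg_one hu
  calc u * exp (-u) * (a - log u) = u * exp (-u) * a + exp (-u) * negMulLog u := by
        rw [negMulLog]; ring
    _ ≤ exp (-1) * a + exp (-1) := by
        gcongr
        exact mul_exp_neg_le_exp_neg_one u
    _ = exp (-1) * (a + 1) := by ring

lemma pow_le_exp_neg_mul_one_sub {r : ℝ} (hr : 0 ≤ r) (n : ℕ) :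
    r ^ n ≤ exp (-(n * (1 - r))) := by
  calc r ^ n ≤ exp (-(1 - r)) ^ n := by
        gcongr; simpa using one_sub_le_exp_neg (1 - r)
    _ = exp (-(n * (1 - r))) := by rw [← exp_nat_mul]; ring_nf

lemma exp_neg_one_le_div_add_one_pow (n : ℕ) : exp (-1) ≤ ((n : ℝ) / (n + 1)) ^ n := by
  rcases Nat.eq_zero_or_pos n with rfl | hn
  · simp
  have h : (n : ℝ) / (n + 1) = (1 + (n : ℝ)⁻¹)⁻¹ := by field_simp
  rw [h, inv_pow, exp_neg]
  exact inv_anti₀ (by positivity) one_add_inv_pow_le_exp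

end Real

lemma sSup_image_norm_ball_le {E : Type*} [SeminormedAddCommGroup E] {f : ℝ → ℝ} {M : ℝ}
    (hM : ∀ r, 0 ≤ r → r < 1 → f r ≤ M) :
    sSup ((fun z : E => f ‖z‖) '' Metric.ball 0 1) ≤ M := by
  refine csSup_le ⟨f ‖(0 : E)‖, 0, Metric.mem_ball_self one_pos, rfl⟩ ?_
  rintro _ ⟨z, hz, rfl⟩
  exact hM _ (norm_nonneg z) (mem_ball_zero_iff.mp hz)

lemma le_sSup_image_norm_ball {E : Type*} [NormedAddCommGroup E] [NormedSpace ℝ E] [Nontrivial E]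
    {f : ℝ → ℝ} {M r : ℝ} (hM : ∀ s, 0 ≤ s → s < 1 → f s ≤ M)
    (hr₀ : 0 ≤ r) (hr₁ : r < 1) :
    f r ≤ sSup ((fun z : E => f ‖z‖) '' Metric.ball 0 1) := by
  obtain ⟨z, hz⟩ := exists_norm_eq E hr₀
  have hbdd : BddAbove ((fun z : E => f ‖z‖) '' Metric.ball 0 1) := by
    refine ⟨M, ?_⟩
    rintro _ ⟨w, hw, rfl⟩
    exact hM _ (norm_nonneg w) (mem_ball_zero_iff.mp hw)
  rw [← hz]
  exact le_csSup hbdd ⟨z, mem_ball_zero_iff.mpr (hz ▸ hr₁), rfl⟩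

/-- `v(r) |F'(r)|` for `F(z) = z ^ (n + 1)` and the weight `v(r) = (1 - r) log (c / (1 - r))`. -/
noncomputable def logBlochProfile (c : ℝ) (n : ℕ) (r : ℝ) : ℝ :=
  (1 - r) * log (c / (1 - r)) * (n + 1) * r ^ n

section LogBlochProfile

variable {c : ℝ} {n : ℕ}

lemma logBlochProfile_le (hc : 1 ≤ c) (hn : 1 ≤ n) {r : ℝ} (hr₀ : 0 ≤ r) (hr₁ : r < 1) :
    logBlochProfile c n r ≤ (1 + (n : ℝ)⁻¹) * (log (c * n) + 1) * exp (-1) := by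
  have hn' : (1 : ℝ) ≤ n := by exact_mod_cast hn
  have ht : 0 < 1 - r := by linarith
  set u := n * (1 - r) with hu
  have hu₀ : 0 < u := by positivity
  have hlog_split : log (c / (1 - r)) = log (c * n) - log u := by
    rw [← log_div (by positivity) hu₀.ne', hu]
    congr 1
    field_simp
  calc logBlochProfile c n r
      ≤ (1 - r) * log (c / (1 - r)) * (n + 1) * exp (-u) := by
        have : 0 ≤ log (c / (1 - r)) := log_nonneg (by rw [le_div_iff₀ ht]; linarith)
        unfold logBlochProfile
        gcongr
        exact pow_le_exp_neg_mul_one_sub hr₀ n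
    _ = (1 + (n : ℝ)⁻¹) * (u * exp (-u) * (log (c * n) - log u)) := by
        rw [hlog_split, hu]; field_simp
    _ ≤ (1 + (n : ℝ)⁻¹) * (exp (-1) * (log (c * n) + 1)) :=
        mul_le_mul_of_nonneg_left
          (mul_exp_neg_mul_sub_log_le (log_nonneg (one_le_mul_of_one_le_of_one_le hc hn')) hu₀)
          (by positivity)
    _ = _ := by ring

lemma log_mul_add_one_mul_exp_neg_one_le_logBlochProfile (hc : 1 ≤ c) (n : ℕ) :
    log (c * (n + 1)) * exp (-1) ≤ logBlochProfile c n (n / (n + 1)) := by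
  have hlog : 0 ≤ log (c * (n + 1)) :=
    log_nonneg (one_le_mul_of_one_le_of_one_le hc (by simp))
  calc log (c * (n + 1)) * exp (-1) ≤ log (c * (n + 1)) * ((n : ℝ) / (n + 1)) ^ n := by
        gcongr; exact exp_neg_one_le_div_add_one_pow n
    _ = logBlochProfile c n (n / (n + 1)) := by
        unfold logBlochProfile
        have h : 1 - (n : ℝ) / (n + 1) = ((n : ℝ) + 1)⁻¹ := by field_simp; ring
        rw [h, div_inv_eq_mul]
        field_simp

lemma exp_one_mul_sSup_logBlochProfile_le (hc : 1 ≤ c) (hn : 1 ≤ n) :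
    exp 1 * sSup ((fun z : ℂ => logBlochProfile c n ‖z‖) '' Metric.ball 0 1) ≤
      (1 + (n : ℝ)⁻¹) * (log (c * n) + 1) := by
  have h := sSup_image_norm_ball_le (E := ℂ) fun _ => logBlochProfile_le hc hn
  calc _ ≤ exp 1 * ((1 + (n : ℝ)⁻¹) * (log (c * n) + 1) * exp (-1)) :=
        mul_le_mul_of_nonneg_left h (exp_pos 1).le
    _ = _ := by rw [exp_neg]; field_simp

lemma log_mul_add_one_le_exp_one_mul_sSup_logBlochProfile (hc : 1 ≤ c) (hn : 1 ≤ n) :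
    log (c * (n + 1)) ≤
      exp 1 * sSup ((fun z : ℂ => logBlochProfile c n ‖z‖) '' Metric.ball 0 1) := by
  have hr : (n : ℝ) / (n + 1) < 1 := (div_lt_one (by positivity)).mpr (by linarith)
  have h := (log_mul_add_one_mul_exp_neg_one_le_logBlochProfile hc n).trans
    (le_sSup_image_norm_ball (E := ℂ) (fun _ => logBlochProfile_le hc hn)
      (by positivity) hr)
  calc log (c * (n + 1)) = exp 1 * (log (c * (n + 1)) * exp (-1)) := by
        rw [exp_neg]; field_simp
    _ ≤ _ := mul_le_mul_of_nonneg_left h (exp_pos 1).le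

end LogBlochProfile

/-- One has `lim_(j→∞) e * ‖F_j‖_log / log (j+1) = 1`, where
`‖F_j‖_log = sup_(z ∈ 𝔻) (1-|z|) * log (3/(1-|z|)) * j * |z|^(j-1)` is the
log-Bloch seminorm of the monomial `F_j z = z^j`. -/
theorem stmt_8 :
    Filter.Tendsto
      (fun j : ℕ => Real.exp 1 *
        sSup ((fun z : ℂ => (1 - ‖z‖) * Real.log (3 / (1 - ‖z‖)) *
          (j : ℝ) * ‖z‖ ^ (j - 1)) '' Metric.ball (0 : ℂ) 1) /
        Real.log ((j : ℝ) + 1))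
      Filter.atTop (nhds 1) := by
  rw [← tendsto_add_atTop_iff_nat 1]
  simp only [Nat.cast_add, Nat.cast_one, Nat.add_sub_cancel]
  change Tendsto (fun n : ℕ => exp 1 * sSup ((fun z : ℂ => logBlochProfile 3 n ‖z‖) ''
    Metric.ball 0 1) / log ((n : ℝ) + 1 + 1)) atTop (𝓝 1)
  have hlog : Tendsto (fun n : ℕ => log ((n : ℝ) + 1 + 1)) atTop atTop :=
    tendsto_log_atTop.comp <| tendsto_atTop_add_const_right _ 1 <|
      tendsto_atTop_add_const_right _ 1 tendsto_natCast_atTop_atTop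
  have hupper : Tendsto (fun n : ℕ => (1 + (n : ℝ)⁻¹) *
      (1 + (log 3 + 1) / log ((n : ℝ) + 1 + 1))) atTop (𝓝 1) := by
    simpa using ((tendsto_const_nhds (x := (1 : ℝ))).add (tendsto_inv_atTop_zero.comp
      tendsto_natCast_atTop_atTop)).mul ((tendsto_const_nhds (x := (1 : ℝ))).add
        ((tendsto_const_nhds (x := log 3 + 1)).div_atTop hlog))
  refine tendsto_of_tendsto_of_tendsto_of_le_of_le' tendsto_const_nhds hupper ?_ ?_
  all_goals filter_upwards [eventually_ge_atTop 1] with n hn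
  all_goals
    have hn₀ : (1 : ℝ) ≤ n := by exact_mod_cast hn
    have hpos : 0 < log ((n : ℝ) + 1 + 1) := log_pos (by linarith)
  · rw [le_div_iff₀ hpos, one_mul]
    refine le_trans (log_le_log (by positivity) (by linarith))
      (log_mul_add_one_le_exp_one_mul_sSup_logBlochProfile (by norm_num) hn)
  · rw [div_le_iff₀ hpos]
    have hlog3 : log (3 * n) ≤ log 3 + log ((n : ℝ) + 1 + 1) := by
      rw [log_mul (by norm_num) (by positivity)]
      gcongr
      linarith
    calc _ ≤ (1 + (n : ℝ)⁻¹) * (log (3 * n) + 1) :=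
          exp_one_mul_sSup_logBlochProfile_le (by norm_num) hn
      _ ≤ (1 + (n : ℝ)⁻¹) * (log ((n : ℝ) + 1 + 1) + (log 3 + 1)) :=
        mul_le_mul_of_nonneg_left (by linarith) (by positivity)
      _ = _ := by field_simp
end

section
/- Let k ∈ {1,2}, let θ ≥ e, and let w be the weight on 𝔻 given by w(z) = (1−|z|^k)·log(θ/(1−|z|^k)). Let μ be a weight on 𝔻 and let φ be a holomorphic self-map of 𝔻. Then the following are equivalent: (i) there exists M ≥ 0 such that every holomorphic function f on 𝔻 with sup_{z∈𝔻} w(z)·|f′(z)| < ∞ satisfies |f(φ(0))| + sup_{z∈𝔻} μ(z)·|(f∘φ)′(z)| ≤ M·(|f(0)| + sup_{z∈𝔻} w(z)·|f′(z)|); (ii) there exists C ≥ 0 such that ‖φ^j‖_μ ≤ C·log(j+1) for every integer j ≥ 1. -/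
/-!
Testing the boundedness of `C_φ` on the monomials `z ^ j`, whose log-Bloch seminorm is
`O(log (j + 1))` because `j t^(j-1) (1 - t) ≤ 1`, gives (ii). Conversely, choosing
`j ≈ 1 / (2 (1 - |φ z|))` in (ii), for which Bernoulli's inequality keeps `|φ z|^(j-1) ≥ 1/2`,
gives `μ z |φ' z| ≲ w (φ z)`, hence `μ |(f ∘ φ)'| ≲ w(φ) |f' ∘ φ| ≤ ‖f‖`. The value `f (φ 0)` is
controlled by the mean value inequality on `closedBall 0 |φ 0|`, where `w ≥ w (φ 0)` since the
weight decreases radially.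
-/

open Real Metric Set

noncomputable def logWeight (θ s : ℝ) : ℝ := s * log (θ / s)

lemma mul_log_div_le {s y : ℝ} (hs : 0 < s) (hy : 0 < y) : s * log (y / s) ≤ y - s := by
  have := mul_le_mul_of_nonneg_left (log_le_sub_one_of_pos (div_pos hy hs)) hs.le
  rwa [mul_sub, mul_div_cancel₀ _ hs.ne', mul_one] at this

lemma nat_mul_pow_pred_mul_one_sub_le_one {t : ℝ} (ht0 : 0 ≤ t) (ht1 : t ≤ 1) (j : ℕ) :
    j * t ^ (j - 1) * (1 - t) ≤ 1 := by
  have hterm : ∀ i ∈ Finset.range j, t ^ (j - 1) ≤ t ^ i := fun i hi =>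
    pow_le_pow_of_le_one ht0 ht1 (by have := Finset.mem_range.mp hi; omega)
  calc j * t ^ (j - 1) * (1 - t) ≤ (∑ i ∈ Finset.range j, t ^ i) * (1 - t) := by
        gcongr
        simpa using Finset.card_nsmul_le_sum _ _ _ hterm
    _ = 1 - t ^ j := geom_sum_mul_neg t j
    _ ≤ 1 := sub_le_self _ (pow_nonneg ht0 j)

lemma log_div_le_log_mul_log_div {b θ s : ℝ} (hb : exp 1 ≤ b) (hθ : exp 1 ≤ θ) (hs : 0 < s)
    (hs1 : s ≤ 1) : log (b / s) ≤ log b * log (θ / s) := by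
  have hb1 : 1 ≤ log b := (le_log_iff_exp_le ((exp_pos 1).trans_le hb)).2 hb
  have hθ1 : 1 ≤ log θ := (le_log_iff_exp_le ((exp_pos 1).trans_le hθ)).2 hθ
  have hs0 : 0 ≤ -log s := neg_nonneg.2 (log_nonpos hs.le hs1)
  rw [log_div ((exp_pos 1).trans_le hb).ne' hs.ne', log_div ((exp_pos 1).trans_le hθ).ne' hs.ne']
  nlinarith

lemma le_mul_log_div_of_forall_mul_nat_mul_pow_le {a C t s : ℝ} (hC : 0 ≤ C) (ht : 0 ≤ t)
    (hs : 0 < s) (hs1 : s ≤ 1) (hts : 1 - t ≤ s)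
    (H : ∀ j : ℕ, 1 ≤ j → a * j * t ^ (j - 1) ≤ C * log (j + 1)) :
    a ≤ 4 * C * (s * log (3 / s)) := by
  have hlog_nonneg : 0 ≤ log (3 / s) := log_nonneg (by rw [le_div_iff₀ hs]; linarith)
  rcases le_or_gt a 0 with ha | ha
  · exact ha.trans (by positivity)
  -- `n ≈ 1/(2s)` is large enough to see `a/s`, yet small enough that Bernoulli keeps
  -- `t^(n-1) ≥ 1/2`.
  set n := ⌈1 / (2 * s)⌉₊
  have hn1 : 1 ≤ n := Nat.one_le_ceil_iff.2 (by positivity)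
  have hn_ge : 1 / (2 * s) ≤ n := Nat.le_ceil _
  have hn_lt : (n : ℝ) < 1 / (2 * s) + 1 := Nat.ceil_lt_add_one (by positivity)
  have hn1' : (1 : ℝ) ≤ n := by exact_mod_cast hn1
  have hn_cast : ((n - 1 : ℕ) : ℝ) = n - 1 := by rw [Nat.cast_sub hn1, Nat.cast_one]
  have hpow : 1 / 2 ≤ t ^ (n - 1) := by
    have hbern := one_add_mul_le_pow (a := t - 1) (by linarith) (n - 1)
    rw [add_sub_cancel, hn_cast] at hbern
    have : ((n : ℝ) - 1) * (1 - t) ≤ ((n : ℝ) - 1) * s :=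
      mul_le_mul_of_nonneg_left hts (by linarith)
    have : ((n : ℝ) - 1) * s < 1 / 2 := by
      have h := mul_lt_mul_of_pos_right (show (n : ℝ) - 1 < 1 / (2 * s) by linarith) hs
      rwa [show 1 / (2 * s) * s = 1 / 2 by field_simp] at h
    nlinarith
  have hlog : log (n + 1) ≤ log (3 / s) := by
    refine log_le_log (by positivity) ?_
    have : 1 / (2 * s) + 2 ≤ 3 / s := by
      rw [div_add' _ _ _ (by positivity), div_le_div_iff₀ (by positivity) hs]
      nlinarith
    linarith
  calc a = 4 * s * (a * (1 / (2 * s)) * (1 / 2)) := by field_simp; ring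
    _ ≤ 4 * s * (a * n * t ^ (n - 1)) := by gcongr
    _ ≤ 4 * s * (C * log (n + 1)) := by gcongr 4 * s * ?_; exact H n hn1
    _ ≤ 4 * s * (C * log (3 / s)) := by gcongr
    _ = 4 * C * (s * log (3 / s)) := by ring

section LogWeight

variable {θ s : ℝ}

lemma one_le_log_div (hθ : exp 1 ≤ θ) (hs : 0 < s) (hs1 : s ≤ 1) : 1 ≤ log (θ / s) := by
  have hθ0 : 0 < θ := (exp_pos 1).trans_le hθ
  rw [le_log_iff_exp_le (div_pos hθ0 hs)]
  exact hθ.trans (le_div_self hθ0.le hs hs1)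

lemma le_logWeight (hθ : exp 1 ≤ θ) (hs : 0 < s) (hs1 : s ≤ 1) : s ≤ logWeight θ s :=
  le_mul_of_one_le_right hs.le (one_le_log_div hθ hs hs1)

lemma logWeight_pos (hθ : exp 1 ≤ θ) (hs : 0 < s) (hs1 : s ≤ 1) : 0 < logWeight θ s :=
  hs.trans_le (le_logWeight hθ hs hs1)

lemma logWeight_monotoneOn (hθ : exp 1 ≤ θ) : MonotoneOn (logWeight θ) (Ioc 0 1) := by
  rintro s₁ ⟨hs₁, -⟩ s₂ ⟨hs₂, hs₂1⟩ h12
  have hθ0 : 0 < θ := (exp_pos 1).trans_le hθ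
  have hsplit : log (θ / s₁) = log (θ / s₂) + log (s₂ / s₁) := by
    rw [← log_mul (by positivity) (by positivity)]
    congr 1
    field_simp
  have := mul_log_div_le hs₁ hs₂
  have := one_le_log_div hθ hs₂ hs₂1
  unfold logWeight
  rw [hsplit]
  nlinarith

lemma logWeight_mul_nat_mul_pow_le (hθ : 1 ≤ θ) {K t : ℝ} (ht0 : 0 ≤ t) (ht1 : t ≤ 1)
    (hs : 0 < s) (hst : s ≤ K * (1 - t)) {j : ℕ} (hj : 1 ≤ j) :
    logWeight θ s * (j * t ^ (j - 1)) ≤ K * log (θ * (j + 1)) + 1 := by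
  set p : ℝ := j * t ^ (j - 1)
  have hp0 : 0 ≤ p := by positivity
  have hpj : p ≤ j := mul_le_of_le_one_right (Nat.cast_nonneg j) (pow_le_one₀ ht0 ht1)
  have hK : 0 ≤ K := by nlinarith
  have hps : p * s ≤ K := by
    nlinarith [nat_mul_pow_pred_mul_one_sub_le_one ht0 ht1 j]
  have hj0 : (0 : ℝ) < j + 1 := by positivity
  have hsplit : log (θ / s) = log (θ * (j + 1)) + log (((j : ℝ) + 1)⁻¹ / s) := by
    rw [← log_mul (by positivity) (by positivity)]
    congr 1
    field_simp
  have hlog : 0 ≤ log (θ * (j + 1)) := log_nonneg (by nlinarith)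
  have hrest : s * log (((j : ℝ) + 1)⁻¹ / s) ≤ ((j : ℝ) + 1)⁻¹ - s :=
    mul_log_div_le hs (by positivity)
  have hpj1 : p * ((j : ℝ) + 1)⁻¹ ≤ 1 := by
    rw [← div_eq_mul_inv, div_le_one hj0]; linarith
  unfold logWeight
  rw [hsplit]
  nlinarith [mul_le_mul_of_nonneg_right hps hlog, mul_le_mul_of_nonneg_left hrest hp0]

end LogWeight

lemma one_sub_norm_pow_mem_Ioc {k : ℕ} (hk : k ≠ 0) {x : ℂ} (hx : x ∈ ball (0 : ℂ) 1) :
    1 - ‖x‖ ^ k ∈ Ioc 0 1 :=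
  ⟨sub_pos.2 (pow_lt_one₀ (norm_nonneg x) (mem_ball_zero_iff.1 hx) hk),
    sub_le_self _ (pow_nonneg (norm_nonneg x) k)⟩

lemma logWeight_one_sub_norm_pow_pos {θ : ℝ} (hθ : exp 1 ≤ θ) {k : ℕ} (hk : k ≠ 0) {x : ℂ}
    (hx : x ∈ ball (0 : ℂ) 1) : 0 < logWeight θ (1 - ‖x‖ ^ k) :=
  logWeight_pos hθ (one_sub_norm_pow_mem_Ioc hk hx).1 (one_sub_norm_pow_mem_Ioc hk hx).2

lemma logWeight_le_of_norm_le {θ : ℝ} (hθ : exp 1 ≤ θ) {k : ℕ} (hk : k ≠ 0) {x u : ℂ}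
    (hxu : ‖x‖ ≤ ‖u‖) (hu : u ∈ ball (0 : ℂ) 1) :
    logWeight θ (1 - ‖u‖ ^ k) ≤ logWeight θ (1 - ‖x‖ ^ k) := by
  have hx : x ∈ ball (0 : ℂ) 1 := mem_ball_zero_iff.2 (hxu.trans_lt (mem_ball_zero_iff.1 hu))
  refine logWeight_monotoneOn hθ (one_sub_norm_pow_mem_Ioc hk hu)
    (one_sub_norm_pow_mem_Ioc hk hx) ?_
  gcongr

lemma norm_le_add_div_logWeight {θ : ℝ} (hθ : exp 1 ≤ θ) {k : ℕ} (hk : k ≠ 0) {f : ℂ → ℂ}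
    (hf : DifferentiableOn ℂ f (ball 0 1)) {S : ℝ}
    (hS : ∀ x ∈ ball (0 : ℂ) 1, logWeight θ (1 - ‖x‖ ^ k) * ‖deriv f x‖ ≤ S)
    {u : ℂ} (hu : u ∈ ball (0 : ℂ) 1) :
    ‖f u‖ ≤ ‖f 0‖ + S / logWeight θ (1 - ‖u‖ ^ k) := by
  have h0 : (0 : ℂ) ∈ ball (0 : ℂ) 1 := mem_ball_self one_pos
  have hS0 : 0 ≤ S :=
    (mul_nonneg (logWeight_one_sub_norm_pow_pos hθ hk h0).le (norm_nonneg _)).trans (hS 0 h0)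
  have hsub : closedBall (0 : ℂ) ‖u‖ ⊆ ball 0 1 := closedBall_subset_ball (mem_ball_zero_iff.1 hu)
  have hbound : ∀ x ∈ closedBall (0 : ℂ) ‖u‖, ‖deriv f x‖ ≤ S / logWeight θ (1 - ‖u‖ ^ k) := by
    intro x hx
    rw [le_div_iff₀ (logWeight_one_sub_norm_pow_pos hθ hk hu), mul_comm]
    calc logWeight θ (1 - ‖u‖ ^ k) * ‖deriv f x‖
        ≤ logWeight θ (1 - ‖x‖ ^ k) * ‖deriv f x‖ := by
          gcongr
          exact logWeight_le_of_norm_le hθ hk (mem_closedBall_zero_iff.1 hx) hu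
      _ ≤ S := hS x (hsub hx)
  have hmvt := (convex_closedBall (0 : ℂ) ‖u‖).norm_image_sub_le_of_norm_deriv_le
    (fun x hx => hf.differentiableAt (isOpen_ball.mem_nhds (hsub hx))) hbound
    (mem_closedBall_self (norm_nonneg u)) (mem_closedBall_zero_iff.2 le_rfl)
  rw [sub_zero] at hmvt
  calc ‖f u‖ ≤ ‖f 0‖ + ‖f u - f 0‖ := norm_le_norm_add_norm_sub' _ _
    _ ≤ ‖f 0‖ + S / logWeight θ (1 - ‖u‖ ^ k) * ‖u‖ := by gcongr
    _ ≤ ‖f 0‖ + S / logWeight θ (1 - ‖u‖ ^ k) := by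
        gcongr
        exact mul_le_of_le_one_right
          (div_nonneg hS0 (logWeight_one_sub_norm_pow_pos hθ hk hu).le) (mem_ball_zero_iff.1 hu).le

lemma logWeight_mul_norm_deriv_pow_le {θ : ℝ} (hθ : 1 ≤ θ) {k : ℕ} (hk : k ≠ 0) {x : ℂ}
    (hx : x ∈ ball (0 : ℂ) 1) {j : ℕ} (hj : 1 ≤ j) :
    logWeight θ (1 - ‖x‖ ^ k) * ‖deriv (fun z : ℂ => z ^ j) x‖ ≤
      ((k * log θ + 1) / log 2 + k) * log (j + 1) := by
  have hx1 : ‖x‖ < 1 := mem_ball_zero_iff.1 hx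
  have hkt : 1 - ‖x‖ ^ k ≤ k * (1 - ‖x‖) := by
    have := one_add_mul_le_pow (a := ‖x‖ - 1) (by linarith [norm_nonneg x]) k
    rw [add_sub_cancel] at this
    linarith
  have hbound := logWeight_mul_nat_mul_pow_le hθ (norm_nonneg x) hx1.le
    (one_sub_norm_pow_mem_Ioc hk hx).1 hkt hj
  have hlog2 : 0 < log 2 := log_pos one_lt_two
  have hj' : (1 : ℝ) ≤ j := by exact_mod_cast hj
  have hlogj : log 2 ≤ log (j + 1) := log_le_log two_pos (by linarith)
  have hlogθ : 0 ≤ log θ := log_nonneg hθ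
  rw [deriv_pow_field, norm_mul, norm_pow, Complex.norm_natCast]
  calc logWeight θ (1 - ‖x‖ ^ k) * (j * ‖x‖ ^ (j - 1))
      ≤ (k * log θ + 1) / log 2 * log 2 + k * log (j + 1) := by
        rw [div_mul_cancel₀ _ hlog2.ne']
        rw [log_mul (by positivity) (by positivity)] at hbound
        linarith
    _ ≤ (k * log θ + 1) / log 2 * log (j + 1) + k * log (j + 1) := by gcongr
    _ = ((k * log θ + 1) / log 2 + k) * log (j + 1) := by ring

-- The supremum is junk (`0`) unless the set is bounded above, which `CompositionBounded` assumes.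
noncomputable def weightedSup (w : ℂ → ℝ) (f : ℂ → ℂ) : ℝ :=
  sSup ((fun z : ℂ => w z * ‖deriv f z‖) '' ball (0 : ℂ) 1)

def CompositionBounded (w μ : ℂ → ℝ) (φ : ℂ → ℂ) : Prop :=
  ∃ M : ℝ, 0 ≤ M ∧ ∀ f : ℂ → ℂ, DifferentiableOn ℂ f (ball (0 : ℂ) 1) →
    BddAbove ((fun z : ℂ => w z * ‖deriv f z‖) '' ball (0 : ℂ) 1) →
    ∀ z ∈ ball (0 : ℂ) 1,
      ‖f (φ 0)‖ + μ z * ‖deriv (f ∘ φ) z‖ ≤ M * (‖f 0‖ + weightedSup w f)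

def PowersLogBounded (μ : ℂ → ℝ) (φ : ℂ → ℂ) : Prop :=
  ∃ C : ℝ, 0 ≤ C ∧ ∀ j : ℕ, 1 ≤ j → ∀ z ∈ ball (0 : ℂ) 1,
    μ z * j * ‖φ z‖ ^ (j - 1) * ‖deriv φ z‖ ≤ C * log (j + 1)

section Characterization

variable {k : ℕ} {θ : ℝ} {μ : ℂ → ℝ} {φ : ℂ → ℂ}

lemma powersLogBounded_of_compositionBounded (hk : k ≠ 0) (hθ : exp 1 ≤ θ)
    (hφ : DifferentiableOn ℂ φ (ball 0 1))
    (h : CompositionBounded (fun z => logWeight θ (1 - ‖z‖ ^ k)) μ φ) :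
    PowersLogBounded μ φ := by
  obtain ⟨M, hM0, hM⟩ := h
  have hθ1 : 1 ≤ θ := (one_le_exp zero_le_one).trans hθ
  have hlogθ : 0 ≤ log θ := log_nonneg hθ1
  refine ⟨M * ((k * log θ + 1) / log 2 + k), by positivity, fun j hj z hz => ?_⟩
  have hbound := fun x (hx : x ∈ ball (0 : ℂ) 1) =>
    logWeight_mul_norm_deriv_pow_le hθ1 hk hx hj
  have hsup : weightedSup (fun z => logWeight θ (1 - ‖z‖ ^ k)) (fun z : ℂ => z ^ j) ≤
      ((k * log θ + 1) / log 2 + k) * log (j + 1) :=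
    csSup_le ((nonempty_ball.2 one_pos).image _) (by rintro _ ⟨x, hx, rfl⟩; exact hbound x hx)
  have hcomp := hM (fun z : ℂ => z ^ j) (differentiable_pow j).differentiableOn
    ⟨_, by rintro _ ⟨x, hx, rfl⟩; exact hbound x hx⟩ z hz
  rw [deriv_comp z (differentiable_pow j).differentiableAt
    (hφ.differentiableAt (isOpen_ball.mem_nhds hz)), deriv_pow_field] at hcomp
  simp only [zero_pow (by omega : j ≠ 0), norm_zero, zero_add, norm_mul, norm_pow,
    Complex.norm_natCast] at hcomp
  calc μ z * j * ‖φ z‖ ^ (j - 1) * ‖deriv φ z‖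
      = μ z * (j * ‖φ z‖ ^ (j - 1) * ‖deriv φ z‖) := by ring
    _ ≤ M * weightedSup (fun z => logWeight θ (1 - ‖z‖ ^ k)) (fun z : ℂ => z ^ j) := by
        linarith [pow_nonneg (norm_nonneg (φ 0)) j]
    _ ≤ M * (((k * log θ + 1) / log 2 + k) * log (j + 1)) := by gcongr
    _ = M * ((k * log θ + 1) / log 2 + k) * log (j + 1) := by ring

lemma compositionBounded_of_powersLogBounded (hk : k ≠ 0) (hθ : exp 1 ≤ θ)
    (hφd : DifferentiableOn ℂ φ (ball 0 1)) (hφm : MapsTo φ (ball 0 1) (ball 0 1))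
    (h : PowersLogBounded μ φ) :
    CompositionBounded (fun z => logWeight θ (1 - ‖z‖ ^ k)) μ φ := by
  obtain ⟨C, hC0, hC⟩ := h
  have hlog3 : 0 ≤ log 3 := log_nonneg (by norm_num)
  have hkey : ∀ z ∈ ball (0 : ℂ) 1,
      μ z * ‖deriv φ z‖ ≤ 4 * C * log 3 * logWeight θ (1 - ‖φ z‖ ^ k) := by
    intro z hz
    obtain ⟨hs, hs1⟩ := one_sub_norm_pow_mem_Ioc hk (hφm hz)
    have hts : 1 - ‖φ z‖ ≤ 1 - ‖φ z‖ ^ k := by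
      gcongr
      exact pow_le_of_le_one (norm_nonneg _) (mem_ball_zero_iff.1 (hφm hz)).le hk
    calc μ z * ‖deriv φ z‖
        ≤ 4 * C * ((1 - ‖φ z‖ ^ k) * log (3 / (1 - ‖φ z‖ ^ k))) :=
          le_mul_log_div_of_forall_mul_nat_mul_pow_le hC0 (norm_nonneg _) hs hs1 hts
            fun j hj => by linarith [hC j hj z hz]
      _ ≤ 4 * C * (log 3 * logWeight θ (1 - ‖φ z‖ ^ k)) := by
          gcongr 4 * C * ?_
          calc (1 - ‖φ z‖ ^ k) * log (3 / (1 - ‖φ z‖ ^ k))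
              ≤ (1 - ‖φ z‖ ^ k) * (log 3 * log (θ / (1 - ‖φ z‖ ^ k))) := by
                gcongr
                exact log_div_le_log_mul_log_div (exp_one_lt_d9.le.trans (by norm_num)) hθ hs hs1
            _ = log 3 * logWeight θ (1 - ‖φ z‖ ^ k) := by unfold logWeight; ring
      _ = 4 * C * log 3 * logWeight θ (1 - ‖φ z‖ ^ k) := by ring
  have h0 : (0 : ℂ) ∈ ball (0 : ℂ) 1 := mem_ball_self one_pos
  set w₀ := logWeight θ (1 - ‖φ 0‖ ^ k)
  have hw₀ : 0 < w₀ := logWeight_one_sub_norm_pow_pos hθ hk (hφm h0)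
  refine ⟨1 + w₀⁻¹ + 4 * C * log 3, by positivity, fun f hf hbdd z hz => ?_⟩
  set S := weightedSup (fun z => logWeight θ (1 - ‖z‖ ^ k)) f
  have hS : ∀ x ∈ ball (0 : ℂ) 1, logWeight θ (1 - ‖x‖ ^ k) * ‖deriv f x‖ ≤ S :=
    fun x hx => le_csSup hbdd ⟨x, hx, rfl⟩
  have hS0 : 0 ≤ S :=
    (mul_nonneg (logWeight_one_sub_norm_pow_pos hθ hk h0).le (norm_nonneg _)).trans (hS 0 h0)
  have hvalue := norm_le_add_div_logWeight hθ hk hf hS (hφm h0)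
  have hderiv : μ z * ‖deriv (f ∘ φ) z‖ ≤ 4 * C * log 3 * S := by
    rw [deriv_comp z (hf.differentiableAt (isOpen_ball.mem_nhds (hφm hz)))
      (hφd.differentiableAt (isOpen_ball.mem_nhds hz)), norm_mul]
    calc μ z * (‖deriv f (φ z)‖ * ‖deriv φ z‖)
        = ‖deriv f (φ z)‖ * (μ z * ‖deriv φ z‖) := by ring
      _ ≤ ‖deriv f (φ z)‖ * (4 * C * log 3 * logWeight θ (1 - ‖φ z‖ ^ k)) := by
          gcongr ‖deriv f (φ z)‖ * ?_; exact hkey z hz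
      _ = 4 * C * log 3 * (logWeight θ (1 - ‖φ z‖ ^ k) * ‖deriv f (φ z)‖) := by ring
      _ ≤ 4 * C * log 3 * S := by gcongr; exact hS _ (hφm hz)
  calc ‖f (φ 0)‖ + μ z * ‖deriv (f ∘ φ) z‖ ≤ ‖f 0‖ + S / w₀ + 4 * C * log 3 * S :=
        add_le_add hvalue hderiv
    _ ≤ (1 + w₀⁻¹ + 4 * C * log 3) * (‖f 0‖ + S) := by
        rw [div_eq_mul_inv]
        nlinarith [mul_nonneg (inv_nonneg.2 hw₀.le) (norm_nonneg (f 0)),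
          mul_nonneg (by positivity : 0 ≤ 4 * C * log 3) (norm_nonneg (f 0))]

end Characterization

theorem stmt_10_general
    (k : ℕ) (hk : k = 1 ∨ k = 2) (θ : ℝ) (hθ : Real.exp 1 ≤ θ)
    (w : ℂ → ℝ)
    (hw : ∀ z : ℂ, w z = (1 - ‖z‖ ^ k) * Real.log (θ / (1 - ‖z‖ ^ k)))
    (μ : ℂ → ℝ)
    (φ : ℂ → ℂ) (hφd : DifferentiableOn ℂ φ (Metric.ball (0 : ℂ) 1))
    (hφm : Set.MapsTo φ (Metric.ball (0 : ℂ) 1) (Metric.ball (0 : ℂ) 1)) :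
    (∃ M : ℝ, 0 ≤ M ∧ ∀ f : ℂ → ℂ, DifferentiableOn ℂ f (Metric.ball (0 : ℂ) 1) →
        BddAbove ((fun z : ℂ => w z * ‖deriv f z‖) '' Metric.ball (0 : ℂ) 1) →
        ∀ z ∈ Metric.ball (0 : ℂ) 1,
          ‖f (φ 0)‖ + μ z * ‖deriv (f ∘ φ) z‖ ≤
          M * (‖f 0‖ +
            sSup ((fun z : ℂ => w z * ‖deriv f z‖) '' Metric.ball (0 : ℂ) 1))) ↔
    (∃ C : ℝ, 0 ≤ C ∧ ∀ j : ℕ, 1 ≤ j → ∀ z ∈ Metric.ball (0 : ℂ) 1,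
        μ z * j * ‖φ z‖ ^ (j - 1) * ‖deriv φ z‖ ≤
        C * Real.log ((j : ℝ) + 1)) := by
  obtain rfl : w = fun z => logWeight θ (1 - ‖z‖ ^ k) := funext hw
  have hk0 : k ≠ 0 := by omega
  exact ⟨powersLogBounded_of_compositionBounded hk0 hθ hφd,
    compositionBounded_of_powersLogBounded hk0 hθ hφd hφm⟩

/-- Let `k ∈ {1,2}`, `θ ≥ e`, and let `w z = (1-|z|^k) * log (θ/(1-|z|^k))` be the
`(k,θ)`-log-Bloch weight on `𝔻`. Let `μ` be a weight on `𝔻` and `φ` a holomorphic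
self-map of `𝔻`. Then `C_φ : B^log_(k,θ) → B^μ` is bounded (stated pointwise in `z`,
which is equivalent to the seminorm inequality) if and only if there is `C ≥ 0` with
`‖φ^j‖_μ ≤ C * log (j+1)` for every `j ≥ 1`. -/
theorem stmt_10
    (k : ℕ) (hk : k = 1 ∨ k = 2) (θ : ℝ) (hθ : Real.exp 1 ≤ θ)
    (w : ℂ → ℝ)
    (hw : ∀ z : ℂ, w z = (1 - ‖z‖ ^ k) * Real.log (θ / (1 - ‖z‖ ^ k)))
    (μ : ℂ → ℝ) (hμc : ContinuousOn μ (Metric.ball (0 : ℂ) 1))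
    (hμb : ∃ M : ℝ, ∀ z ∈ Metric.ball (0 : ℂ) 1, μ z ≤ M)
    (hμp : ∀ z ∈ Metric.ball (0 : ℂ) 1, 0 < μ z)
    (φ : ℂ → ℂ) (hφd : DifferentiableOn ℂ φ (Metric.ball (0 : ℂ) 1))
    (hφm : Set.MapsTo φ (Metric.ball (0 : ℂ) 1) (Metric.ball (0 : ℂ) 1)) :
    (∃ M : ℝ, 0 ≤ M ∧ ∀ f : ℂ → ℂ, DifferentiableOn ℂ f (Metric.ball (0 : ℂ) 1) →
        BddAbove ((fun z : ℂ => w z * ‖deriv f z‖) '' Metric.ball (0 : ℂ) 1) →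
        ∀ z ∈ Metric.ball (0 : ℂ) 1,
          ‖f (φ 0)‖ + μ z * ‖deriv (f ∘ φ) z‖ ≤
          M * (‖f 0‖ +
            sSup ((fun z : ℂ => w z * ‖deriv f z‖) '' Metric.ball (0 : ℂ) 1))) ↔
    (∃ C : ℝ, 0 ≤ C ∧ ∀ j : ℕ, 1 ≤ j → ∀ z ∈ Metric.ball (0 : ℂ) 1,
        μ z * j * ‖φ z‖ ^ (j - 1) * ‖deriv φ z‖ ≤
        C * Real.log ((j : ℝ) + 1)) :=
  stmt_10_general k hk θ hθ w hw μ φ hφd hφm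
end

section
/- Let r ∈ [0,1] and let f be a holomorphic function on 𝔻 with ‖f‖_log < ∞. Let f_r denote the dilate f_r(z) = f(rz). Then |f_r(0)| + ‖f_r‖_log ≤ |f(0)| + ‖f‖_log; that is, |f(0)| + sup_{z∈𝔻} v_log(z)·r·|f′(rz)| ≤ |f(0)| + sup_{z∈𝔻} v_log(z)·|f′(z)|. In particular, the dilation operator K_r f = f_r maps the log-Bloch space into itself with norm at most 1. -/
/-!
Since `0 ≤ r ≤ 1` and the log-Bloch weight is a decreasing function of `‖z‖`,
`r · v_log z ≤ v_log z ≤ v_log (r z)`; so each term `v_log z · r ‖f' (r z)‖` is bounded by the term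
`v_log (r z) ‖f' (r z)‖` of the supremum defining `‖f‖_log`.
-/

open Real Set

/-- The derivative is `log (c / t) - 1`, nonnegative up to `t = c / e`. -/
theorem monotoneOn_mul_log_div (c : ℝ) :
    MonotoneOn (fun t : ℝ => t * log (c / t)) (Ioc 0 (c / exp 1)) := by
  rintro a ⟨ha, -⟩ b ⟨hb, hbc⟩ hab
  have hc : 0 < c := (div_pos_iff_of_pos_right (exp_pos 1)).mp (hb.trans_le hbc)
  have one_le_log : 1 ≤ log (c / b) := by
    rw [le_log_iff_exp_le (by positivity), le_div_iff₀ hb]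
    rwa [le_div_iff₀ (exp_pos 1), mul_comm] at hbc
  have log_split : log (c / a) = log (c / b) + log (b / a) := by
    rw [← log_mul (by positivity) (by positivity)]
    congr 1
    field_simp
  have log_ratio : a * log (b / a) ≤ b - a :=
    calc a * log (b / a) ≤ a * (b / a - 1) :=
          mul_le_mul_of_nonneg_left (log_le_sub_one_of_pos (by positivity)) ha.le
      _ = b - a := by field_simp
  simp only [log_split]
  nlinarith [mul_nonneg (sub_nonneg.mpr hab) (sub_nonneg.mpr one_le_log)]

noncomputable def logBlochWeight (z : ℂ) : ℝ := (1 - ‖z‖) * log (3 / (1 - ‖z‖))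

theorem logBlochWeight_nonneg {z : ℂ} (hz : ‖z‖ < 1) : 0 ≤ logBlochWeight z := by
  have hpos : 0 < 1 - ‖z‖ := by linarith
  have : 0 ≤ log (3 / (1 - ‖z‖)) :=
    log_nonneg (by rw [le_div_iff₀ hpos]; linarith [norm_nonneg z])
  exact mul_nonneg hpos.le this

theorem logBlochWeight_le_of_norm_le {w z : ℂ} (hwz : ‖w‖ ≤ ‖z‖) (hz : ‖z‖ < 1) :
    logBlochWeight z ≤ logBlochWeight w := by
  have three_div_exp : (1 : ℝ) ≤ 3 / exp 1 := by
    rw [le_div_iff₀ (exp_pos 1)]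
    linarith [exp_one_lt_d9]
  have mem : ∀ u : ℂ, ‖u‖ < 1 → 1 - ‖u‖ ∈ Ioc 0 (3 / exp 1) := fun u hu =>
    ⟨by linarith, by linarith [norm_nonneg u]⟩
  exact monotoneOn_mul_log_div 3 (mem z hz) (mem w (hwz.trans_lt hz)) (by linarith)

theorem norm_ofReal_mul_le {r : ℝ} (hr : r ∈ Icc (0 : ℝ) 1) (z : ℂ) : ‖(r : ℂ) * z‖ ≤ ‖z‖ := by
  rw [norm_mul, Complex.norm_of_nonneg hr.1]
  exact mul_le_of_le_one_left (norm_nonneg z) hr.2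

theorem mul_logBlochWeight_le_logBlochWeight_mul {r : ℝ} (hr : r ∈ Icc (0 : ℝ) 1) {z : ℂ}
    (hz : ‖z‖ < 1) : r * logBlochWeight z ≤ logBlochWeight (r * z) := by
  calc r * logBlochWeight z ≤ logBlochWeight z :=
        mul_le_of_le_one_left (logBlochWeight_nonneg hz) hr.2
    _ ≤ logBlochWeight (r * z) := logBlochWeight_le_of_norm_le (norm_ofReal_mul_le hr z) hz

theorem stmt_15_general (r : ℝ) (hr : r ∈ Set.Icc (0 : ℝ) 1)
    (f : ℂ → ℂ)
    (hbdd : BddAbove ((fun z : ℂ => (1 - ‖z‖) * Real.log (3 / (1 - ‖z‖)) *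
      ‖deriv f z‖) '' Metric.ball (0 : ℂ) 1)) :
    ∀ z ∈ Metric.ball (0 : ℂ) 1,
      ‖f 0‖ + (1 - ‖z‖) * Real.log (3 / (1 - ‖z‖)) *
        (r * ‖deriv f ((r : ℂ) * z)‖) ≤
      ‖f 0‖ +
        sSup ((fun z : ℂ => (1 - ‖z‖) * Real.log (3 / (1 - ‖z‖)) *
          ‖deriv f z‖) '' Metric.ball (0 : ℂ) 1) := by
  intro z hz
  rw [mem_ball_zero_iff] at hz
  have hrz : (r : ℂ) * z ∈ Metric.ball (0 : ℂ) 1 :=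
    mem_ball_zero_iff.mpr ((norm_ofReal_mul_le hr z).trans_lt hz)
  gcongr
  calc logBlochWeight z * (r * ‖deriv f (r * z)‖)
      = r * logBlochWeight z * ‖deriv f (r * z)‖ := by ring
    _ ≤ logBlochWeight (r * z) * ‖deriv f (r * z)‖ := by
        gcongr
        exact mul_logBlochWeight_le_logBlochWeight_mul hr hz
    _ ≤ _ := le_csSup hbdd ⟨r * z, hrz, rfl⟩

/-- Let `r ∈ [0,1]` and let `f` be holomorphic on `𝔻` with finite log-Bloch seminorm.
Then the dilate `f_r z = f (r * z)` satisfies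
`|f_r 0| + ‖f_r‖_log ≤ |f 0| + ‖f‖_log` (stated pointwise in `z`, which is
equivalent, using that `f_r' z = r * f' (r*z)` and `f_r 0 = f 0`); in particular
the dilation operator `K_r` has norm at most `1` on the log-Bloch space. -/
theorem stmt_15 (r : ℝ) (hr : r ∈ Set.Icc (0 : ℝ) 1)
    (f : ℂ → ℂ) (hf : DifferentiableOn ℂ f (Metric.ball (0 : ℂ) 1))
    (hbdd : BddAbove ((fun z : ℂ => (1 - ‖z‖) * Real.log (3 / (1 - ‖z‖)) *
      ‖deriv f z‖) '' Metric.ball (0 : ℂ) 1)) :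
    ∀ z ∈ Metric.ball (0 : ℂ) 1,
      ‖f 0‖ + (1 - ‖z‖) * Real.log (3 / (1 - ‖z‖)) *
        (r * ‖deriv f ((r : ℂ) * z)‖) ≤
      ‖f 0‖ +
        sSup ((fun z : ℂ => (1 - ‖z‖) * Real.log (3 / (1 - ‖z‖)) *
          ‖deriv f z‖) '' Metric.ball (0 : ℂ) 1) :=
  stmt_15_general r hr f hbdd
end
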